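/- Assume in addition 4/3 ≤ γ < 2. Let φ(t,x) := t^{2/γ−1} ψ(t,x) be the renormalized solution. Then for every multi-index α ∈ ℕ³ and every t ∈ (0, t₀], the renormalized energy F_α(t) := (1/2) ∫_{[0,1]³} [ t^{4−4/γ} (∂_t∂_x^α φ)²(t,x) + t^{4−4/γ−4/(3γ)} Σ_{i=1}^{3} (∂_{x_i}∂_x^α φ)²(t,x) ] dx satisfies F_α(t) ≤ F_α(t₀). -/

import Mathlib

noncomputable section

open MeasureTheory Filter Set

/-- Spatial partial derivative `∂_{x_i}` in the `i`-th coordinate direction. -/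
def pd (i : Fin 3) (f : (Fin 3 → ℝ) → ℝ) (x : Fin 3 → ℝ) : ℝ :=
  deriv (fun s => f (Function.update x i s)) (x i)

/-- Iterated spatial derivative `∂_x^α` for a multi-index `α ∈ ℕ³`. -/
def pdMulti (α : Fin 3 → ℕ) (f : (Fin 3 → ℝ) → ℝ) : (Fin 3 → ℝ) → ℝ :=
  (pd 0)^[α 0] ((pd 1)^[α 1] ((pd 2)^[α 2] f))

/-- Time derivative `∂_t`. -/
def dtd (ψ : ℝ → (Fin 3 → ℝ) → ℝ) : ℝ → (Fin 3 → ℝ) → ℝ :=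
  fun t x => deriv (fun s => ψ s x) t

/-- `ℤ³`-periodicity of a function on `ℝ³`. -/
def ZPeriodic (f : (Fin 3 → ℝ) → ℝ) : Prop :=
  ∀ (x : Fin 3 → ℝ) (k : Fin 3 → ℤ), f (x + fun i => (k i : ℝ)) = f x

/-- Smoothness of `ψ` on `(0,∞) × ℝ³`. -/
def SmoothOnPos (ψ : ℝ → (Fin 3 → ℝ) → ℝ) : Prop :=
  ContDiffOn ℝ (⊤ : ℕ∞) (fun p : ℝ × (Fin 3 → ℝ) => ψ p.1 p.2)
    {p : ℝ × (Fin 3 → ℝ) | 0 < p.1}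

/-- The unit cube `[0,1]³`, a fundamental domain for `𝕋³`. -/
def cube : Set (Fin 3 → ℝ) := Set.Icc 0 1

/-- The FLRW wave equation `□_g ψ = 0` in coordinates. -/
def FLRWwave (γ : ℝ) (ψ : ℝ → (Fin 3 → ℝ) → ℝ) : Prop :=
  ∀ t : ℝ, 0 < t → ∀ x : Fin 3 → ℝ,
    dtd (dtd ψ) t x + (2 / γ) * t⁻¹ * dtd ψ t x
      - t ^ (-(4 / (3 * γ))) * ∑ i : Fin 3, pd i (pd i (ψ t)) x = 0

/-- The renormalized energy `F_α(t)` of `φ = t^{2/γ−1}ψ` (stiffest region `4/3 ≤ γ < 2`). -/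
def Fren (γ : ℝ) (φ : ℝ → (Fin 3 → ℝ) → ℝ) (α : Fin 3 → ℕ) (t : ℝ) : ℝ :=
  (1 / 2) * ∫ x in cube,
    (t ^ (4 - 4 / γ) * (dtd (fun s => pdMulti α (φ s)) t x) ^ 2
      + t ^ (4 - 4 / γ - 4 / (3 * γ)) * ∑ i : Fin 3, (pd i (pdMulti α (φ t)) x) ^ 2)

/-!
With `φ = t^(2/γ-1) ψ` the equation becomes `φ_tt + (2 - 2/γ) t⁻¹ φ_t - t^(-4/(3γ)) Δφ = 0`, and
so does every `∂_x^α φ`, since the coefficients depend on `t` only. For a solution `G` of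
`G_tt + b t⁻¹ G_t - t^(-c) ΔG = 0` the energy `½ ∫ t^(2b) G_t² + t^(2b-c) |∇G|²` has derivative
`(2b-c)/2 · t^(2b-c-1) ∫ |∇G|²`: the damping cancels the derivative of `t^(2b)`, and the rest of
the flux is a divergence, whose integral over the torus vanishes. Here `2b - c = 4 - 16/(3γ)`,
which is nonnegative exactly when `γ ≥ 4/3`.
-/

open scoped ContDiff Topology

section DirDeriv

variable {E : Type*} [NormedAddCommGroup E] [NormedSpace ℝ E] {F G : E → ℝ} {p : E}

def dirDeriv (v : E) (F : E → ℝ) : E → ℝ := fun p => fderiv ℝ F p v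

notation "∂ₜ" => dirDeriv (1, 0)

notation "∂[" i "]" => dirDeriv (0, Pi.single i 1)

lemma dirDeriv_congr_of_eqOn {U : Set E} (hU : IsOpen U) (h : EqOn F G U) (hp : p ∈ U)
    (v : E) : dirDeriv v F p = dirDeriv v G p := by
  simp only [dirDeriv, (h.eventuallyEq_of_mem (hU.mem_nhds hp)).fderiv_eq]

lemma dirDeriv_add (hF : DifferentiableAt ℝ F p) (hG : DifferentiableAt ℝ G p) (v : E) :
    dirDeriv v (fun q => F q + G q) p = dirDeriv v F p + dirDeriv v G p := by
  simp [dirDeriv, fderiv_fun_add hF hG]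

lemma dirDeriv_sub (hF : DifferentiableAt ℝ F p) (hG : DifferentiableAt ℝ G p) (v : E) :
    dirDeriv v (fun q => F q - G q) p = dirDeriv v F p - dirDeriv v G p := by
  simp [dirDeriv, fderiv_fun_sub hF hG]

lemma dirDeriv_mul (hF : DifferentiableAt ℝ F p) (hG : DifferentiableAt ℝ G p) (v : E) :
    dirDeriv v (fun q => F q * G q) p = dirDeriv v F p * G p + F p * dirDeriv v G p := by
  simp [dirDeriv, fderiv_fun_mul hF hG]
  ring

lemma dirDeriv_sq (hF : DifferentiableAt ℝ F p) (v : E) :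
    dirDeriv v (fun q => F q ^ 2) p = 2 * F p * dirDeriv v F p := by
  simp [dirDeriv, fderiv_fun_pow 2 hF]

lemma dirDeriv_const_mul (hF : DifferentiableAt ℝ F p) (c : ℝ) (v : E) :
    dirDeriv v (fun q => c * F q) p = c * dirDeriv v F p := by
  simp [dirDeriv, fderiv_const_mul hF c]

lemma dirDeriv_sum {ι : Type*} (s : Finset ι) {F : ι → E → ℝ}
    (hF : ∀ i ∈ s, DifferentiableAt ℝ (F i) p) (v : E) :
    dirDeriv v (fun q => ∑ i ∈ s, F i q) p = ∑ i ∈ s, dirDeriv v (F i) p := by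
  simp [dirDeriv, fderiv_fun_sum hF]

lemma dirDeriv_add_right_eq {c : E} (h : (fun q => F (q + c)) =ᶠ[𝓝 p] F) (v : E) :
    dirDeriv v F (p + c) = dirDeriv v F p := by
  simp only [dirDeriv, ← fderiv_comp_add_right, h.fderiv_eq]

lemma dirDeriv_comm (hF : ContDiffAt ℝ 2 F p) (v w : E) :
    dirDeriv v (dirDeriv w F) p = dirDeriv w (dirDeriv v F) p := by
  have hd : DifferentiableAt ℝ (fderiv ℝ F) p :=
    (hF.fderiv_right (m := 1) (by norm_num)).differentiableAt (by norm_num)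
  have hsymm : IsSymmSndFDerivAt ℝ F p :=
    hF.isSymmSndFDerivAt (by simp [minSmoothness_of_isRCLikeNormedField])
  have second : ∀ u z : E, dirDeriv u (dirDeriv z F) p = fderiv ℝ (fderiv ℝ F) p u z := by
    intro u z
    change fderiv ℝ (fun q => fderiv ℝ F q z) p u = _
    simp [fderiv_clm_apply hd (differentiableAt_const z)]
  rw [second, second, hsymm.eq]

lemma ContDiffOn.dirDeriv {U : Set E} (hU : IsOpen U) (hF : ContDiffOn ℝ ∞ F U) (v : E) :
    ContDiffOn ℝ ∞ (dirDeriv v F) U :=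
  (hF.fderiv_of_isOpen hU le_rfl).clm_apply contDiffOn_const

end DirDeriv

section TimeSlices

def posTime {V : Type*} : Set (ℝ × V) := {p | 0 < p.1}

lemma isOpen_posTime {V : Type*} [TopologicalSpace V] : IsOpen (posTime : Set (ℝ × V)) :=
  isOpen_lt continuous_const continuous_fst

lemma continuous_slice {V : Type*} [TopologicalSpace V] {F : ℝ × V → ℝ}
    (hF : ContinuousOn F posTime) {t : ℝ} (ht : 0 < t) : Continuous (fun x => F (t, x)) :=
  hF.comp_continuous (continuous_const.prodMk continuous_id) fun _ => ht

variable {V : Type*} [NormedAddCommGroup V] [NormedSpace ℝ V] {F H : ℝ × V → ℝ} {t : ℝ}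
  {x : V} {p : ℝ × V}

lemma ContDiffOn.differentiableAt_posTime (hF : ContDiffOn ℝ ∞ F posTime) (hp : p ∈ posTime) :
    DifferentiableAt ℝ F p :=
  (hF.contDiffAt (isOpen_posTime.mem_nhds hp)).differentiableAt (by simp)

lemma dirDeriv_comm_of_contDiffOn (hF : ContDiffOn ℝ ∞ F posTime) (hp : p ∈ posTime)
    (v w : ℝ × V) : dirDeriv v (dirDeriv w F) p = dirDeriv w (dirDeriv v F) p :=
  dirDeriv_comm ((hF.contDiffAt (isOpen_posTime.mem_nhds hp)).of_le ENat.LEInfty.out) v w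

lemma contDiffOn_rpow_fst (r : ℝ) : ContDiffOn ℝ ∞ (fun q : ℝ × V => q.1 ^ r) posTime :=
  fun _ hp => ((Real.contDiffAt_rpow_const_of_ne (ne_of_gt hp)).comp _
    contDiff_fst.contDiffAt).contDiffWithinAt

lemma dirDeriv_comm₃_of_contDiffOn (hF : ContDiffOn ℝ ∞ F posTime) (hp : p ∈ posTime)
    (u v w : ℝ × V) :
    dirDeriv u (dirDeriv v (dirDeriv w F)) p = dirDeriv v (dirDeriv w (dirDeriv u F)) p := by
  rw [dirDeriv_comm_of_contDiffOn (hF.dirDeriv isOpen_posTime w) hp u v]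
  exact dirDeriv_congr_of_eqOn isOpen_posTime
    (fun q hq => dirDeriv_comm_of_contDiffOn hF hq u w) hp v

lemma hasDerivAt_slice (hF : DifferentiableAt ℝ F (t, x)) :
    HasDerivAt (fun s => F (s, x)) (∂ₜ F (t, x)) t :=
  hF.hasFDerivAt.comp_hasDerivAt t ((hasDerivAt_id t).prodMk (hasDerivAt_const t x))

lemma dirDeriv_comp_fst_mul {g : ℝ → ℝ} (hg : DifferentiableAt ℝ g p.1)
    (hH : DifferentiableAt ℝ H p) (v : ℝ × V) :
    dirDeriv v (fun q => g q.1 * H q) p = v.1 * deriv g p.1 * H p + g p.1 * dirDeriv v H p := by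
  have hgp : HasFDerivAt (fun q : ℝ × V => g q.1)
      (deriv g p.1 • ContinuousLinearMap.fst ℝ ℝ V) p :=
    hg.hasDerivAt.comp_hasFDerivAt p hasFDerivAt_fst
  rw [dirDeriv_mul hgp.differentiableAt hH, dirDeriv, hgp.fderiv]
  simp [mul_comm]

lemma Dt_rpow_fst_mul (r : ℝ) (hp : p ∈ posTime) (hH : DifferentiableAt ℝ H p) :
    ∂ₜ (fun q => q.1 ^ r * H q) p = r * p.1 ^ (r - 1) * H p + p.1 ^ r * ∂ₜ H p := by
  rw [dirDeriv_comp_fst_mul (Real.differentiableAt_rpow_const_of_ne r (ne_of_gt hp)) hH,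
    Real.deriv_rpow_const, one_mul]

variable [MeasurableSpace V] [BorelSpace V] {μ : Measure V} [IsFiniteMeasureOnCompacts μ]

lemma hasDerivAt_setIntegral_slice {K : Set V} (hK : IsCompact K)
    (hF : ContDiffOn ℝ 1 F posTime) (ht : 0 < t) :
    HasDerivAt (fun s => ∫ x in K, F (s, x) ∂μ) (∫ x in K, ∂ₜ F (t, x) ∂μ) t := by
  have hDt : ContinuousOn (∂ₜ F) posTime :=
    (hF.continuousOn_fderiv_of_isOpen isOpen_posTime le_rfl).clm_apply continuousOn_const
  obtain ⟨C, hC⟩ : ∃ C, ∀ q ∈ Icc (t / 2) (3 * t / 2) ×ˢ K, ‖∂ₜ F q‖ ≤ C :=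
    (isCompact_Icc.prod hK).exists_bound_of_continuousOn
      (hDt.mono fun q hq => show 0 < q.1 by linarith [hq.1.1])
  have hball : ∀ θ ∈ Metric.ball t (t / 2), θ ∈ Icc (t / 2) (3 * t / 2) := by
    intro θ hθ
    rw [Metric.mem_ball, Real.dist_eq, abs_lt] at hθ
    constructor <;> linarith
  have hpos : ∀ θ ∈ Metric.ball t (t / 2), 0 < θ := fun θ hθ => by linarith [(hball θ hθ).1]
  refine (hasDerivAt_integral_of_dominated_loc_of_deriv_le (μ := μ.restrict K)
    (F := fun θ x => F (θ, x)) (F' := fun θ x => ∂ₜ F (θ, x)) (bound := fun _ => C)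
    (Metric.ball_mem_nhds t (half_pos ht)) ?_ ?_ ?_ ?_ ?_ ?_).2
  · filter_upwards [eventually_gt_nhds ht] with θ hθ
    exact (continuous_slice hF.continuousOn hθ).aestronglyMeasurable
  · exact (continuous_slice hF.continuousOn ht).continuousOn.integrableOn_compact hK
  · exact (continuous_slice hDt ht).aestronglyMeasurable
  · filter_upwards [ae_restrict_mem hK.measurableSet] with x hx θ hθ
    exact hC (θ, x) ⟨hball θ hθ, hx⟩
  · exact integrableOn_const hK.measure_lt_top.ne
  · refine ae_of_all _ fun x θ hθ => hasDerivAt_slice ?_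
    exact (hF.contDiffAt (isOpen_posTime.mem_nhds (hpos θ hθ))).differentiableAt one_ne_zero

end TimeSlices

lemma Fin.insertNth_one_eq_add_single {n : ℕ} (i : Fin (n + 1)) (y : Fin n → ℝ) :
    Fin.insertNth (α := fun _ => ℝ) i 1 y = Fin.insertNth i 0 y + Pi.single i 1 := by
  funext j
  refine Fin.succAboveCases i ?_ (fun _ => ?_) j <;> simp

/-- Opposite faces of the cube cancel by periodicity. -/
lemma integral_unitCube_divergence_eq_zero_of_periodic {n : ℕ}
    {f : Fin (n + 1) → (Fin (n + 1) → ℝ) → ℝ} (hf : ∀ i, ContDiff ℝ 1 (f i))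
    (hper : ∀ i x, f i (x + Pi.single i 1) = f i x) :
    ∫ x in Icc (0 : Fin (n + 1) → ℝ) 1, ∑ i, fderiv ℝ (f i) x (Pi.single i 1) = 0 := by
  rw [integral_divergence_of_hasFDerivAt_off_countable' 0 1 (fun _ => zero_le_one) f
    (fun i => fderiv ℝ (f i)) ∅ countable_empty (fun i => (hf i).continuous.continuousOn)
    (fun x _ i => ((hf i).differentiable one_ne_zero x).hasFDerivAt)]
  · refine Finset.sum_eq_zero fun i _ =>
      sub_eq_zero.2 <| setIntegral_congr_fun measurableSet_Icc fun y _ => ?_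
    rw [Pi.one_apply, Pi.zero_apply, Fin.insertNth_one_eq_add_single, hper]
  · exact (continuous_finsetSum _ fun i _ =>
      ((hf i).continuous_fderiv one_ne_zero).clm_apply continuous_const).continuousOn
      |>.integrableOn_compact isCompact_Icc

abbrev Spacetime := ℝ × (Fin 3 → ℝ)

def Dmulti (α : Fin 3 → ℕ) (F : Spacetime → ℝ) : Spacetime → ℝ :=
  (∂[0])^[α 0] ((∂[1])^[α 1] ((∂[2])^[α 2] F))

def SpatiallyPeriodic (F : Spacetime → ℝ) : Prop :=
  ∀ t : ℝ, 0 < t → ZPeriodic (fun x => F (t, x))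

section Spacetime

variable {F G : Spacetime → ℝ} {t : ℝ} {x : Fin 3 → ℝ} {p : Spacetime}

lemma hasDerivAt_slice_update (hF : DifferentiableAt ℝ F (t, x)) (i : Fin 3) :
    HasDerivAt (fun s => F (t, Function.update x i s)) (∂[i] F (t, x)) (x i) := by
  have hF' : HasFDerivAt F (fderiv ℝ F (t, x)) (t, Function.update x i (x i)) := by
    rw [Function.update_eq_self]; exact hF.hasFDerivAt
  exact hF'.comp_hasDerivAt _
    ((hasDerivAt_const (x i) t).prodMk (hasDerivAt_update x i (x i)))

lemma Dx_comp_fst_mul {g : ℝ → ℝ} (hg : DifferentiableAt ℝ g p.1)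
    (hF : DifferentiableAt ℝ F p) (i : Fin 3) :
    ∂[i] (fun q => g q.1 * F q) p = g p.1 * ∂[i] F p := by
  simp [dirDeriv_comp_fst_mul hg hF]

lemma dtd_eq_Dt {φ : ℝ → (Fin 3 → ℝ) → ℝ} (hF : ContDiffOn ℝ ∞ F posTime)
    (hφ : ∀ s, 0 < s → ∀ y, φ s y = F (s, y)) (ht : 0 < t) : dtd φ t x = ∂ₜ F (t, x) := by
  have hslice : (fun s => φ s x) =ᶠ[𝓝 t] fun s => F (s, x) := by
    filter_upwards [eventually_gt_nhds ht] with s hs using hφ s hs x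
  rw [dtd, hslice.deriv_eq, (hasDerivAt_slice (hF.differentiableAt_posTime ht)).deriv]

lemma pd_eq_Dx {f : (Fin 3 → ℝ) → ℝ} (hF : ContDiffOn ℝ ∞ F posTime)
    (hf : ∀ y, f y = F (t, y)) (ht : 0 < t) (i : Fin 3) : pd i f x = ∂[i] F (t, x) := by
  rw [pd, funext hf, (hasDerivAt_slice_update (hF.differentiableAt_posTime ht) i).deriv]

lemma iterate_pd_eq_iterate_Dx {f : (Fin 3 → ℝ) → ℝ} (hF : ContDiffOn ℝ ∞ F posTime)
    (hf : ∀ y, f y = F (t, y)) (ht : 0 < t) (i : Fin 3) (n : ℕ) (y : Fin 3 → ℝ) :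
    (pd i)^[n] f y = (∂[i])^[n] F (t, y) := by
  induction n generalizing f F with
  | zero => exact hf y
  | succ n ih =>
    exact ih (hF.dirDeriv isOpen_posTime _) (fun _ => pd_eq_Dx hF hf ht i)

lemma ContDiffOn.iterate_Dx (hF : ContDiffOn ℝ ∞ F posTime) (i : Fin 3) (n : ℕ) :
    ContDiffOn ℝ ∞ ((∂[i])^[n] F) posTime := by
  induction n generalizing F with
  | zero => exact hF
  | succ n ih => exact ih (hF.dirDeriv isOpen_posTime _)

lemma pdMulti_eq_Dmulti {f : (Fin 3 → ℝ) → ℝ} (hF : ContDiffOn ℝ ∞ F posTime)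
    (hf : ∀ y, f y = F (t, y)) (ht : 0 < t) (α : Fin 3 → ℕ) (y : Fin 3 → ℝ) :
    pdMulti α f y = Dmulti α F (t, y) := by
  have h2 := hF.iterate_Dx 2 (α 2)
  refine iterate_pd_eq_iterate_Dx (h2.iterate_Dx 1 (α 1)) (fun z => ?_) ht 0 (α 0) y
  exact iterate_pd_eq_iterate_Dx h2 (iterate_pd_eq_iterate_Dx hF hf ht 2 (α 2)) ht 1 (α 1) z

lemma Dmulti_induction {P : (Spacetime → ℝ) → Prop}
    (hP : ∀ i G, ContDiffOn ℝ ∞ G posTime → P G → P (∂[i] G))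
    (hF : ContDiffOn ℝ ∞ F posTime) (h : P F) (α : Fin 3 → ℕ) : P (Dmulti α F) := by
  have iter : ∀ i n G, ContDiffOn ℝ ∞ G posTime → P G → P ((∂[i])^[n] G) := by
    intro i n
    induction n with
    | zero => exact fun _ _ h => h
    | succ n ih => exact fun G hG h => ih _ (hG.dirDeriv isOpen_posTime _) (hP i G hG h)
  exact iter 0 _ _ ((hF.iterate_Dx 2 _).iterate_Dx 1 _)
    (iter 1 _ _ (hF.iterate_Dx 2 _) (iter 2 _ _ hF h))

lemma ContDiffOn.Dmulti (hF : ContDiffOn ℝ ∞ F posTime) (α : Fin 3 → ℕ) :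
    ContDiffOn ℝ ∞ (Dmulti α F) posTime :=
  Dmulti_induction (P := fun G => ContDiffOn ℝ ∞ G posTime)
    (fun _ _ hG _ => hG.dirDeriv isOpen_posTime _) hF hF α

lemma SpatiallyPeriodic.dirDeriv (hF : SpatiallyPeriodic F) (v : Spacetime) :
    SpatiallyPeriodic (dirDeriv v F) := by
  intro t ht x k
  set c : Spacetime := (0, fun i => (k i : ℝ))
  have hshift : ∀ q : Spacetime, (q.1, q.2 + fun i => (k i : ℝ)) = q + c := fun q =>
    Prod.ext (add_zero q.1).symm rfl
  have hnear : (fun q => F (q + c)) =ᶠ[𝓝 (t, x)] F := by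
    filter_upwards [isOpen_posTime.mem_nhds ht] with q hq
    rw [← hshift]
    exact hF q.1 hq q.2 k
  have := dirDeriv_add_right_eq hnear v
  rwa [← hshift] at this

lemma SpatiallyPeriodic.mul (hF : SpatiallyPeriodic F) (hG : SpatiallyPeriodic G) :
    SpatiallyPeriodic (fun q => F q * G q) := fun t ht x k => by
  simp only [hF t ht x k, hG t ht x k]

end Spacetime

def waveOp (b c : ℝ) (F : Spacetime → ℝ) (p : Spacetime) : ℝ :=
  ∂ₜ (∂ₜ F) p + b * p.1⁻¹ * ∂ₜ F p - p.1 ^ (-c) * ∑ i, ∂[i] (∂[i] F) p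

def SolvesWave (b c : ℝ) (F : Spacetime → ℝ) : Prop := EqOn (waveOp b c F) 0 posTime

section Wave

variable {F Ψ : Spacetime → ℝ} {p : Spacetime} {b c : ℝ}

lemma FLRWwave.solvesWave {γ : ℝ} {ψ : ℝ → (Fin 3 → ℝ) → ℝ} (hψ : SmoothOnPos ψ)
    (h : FLRWwave γ ψ) : SolvesWave (2 / γ) (4 / (3 * γ)) fun p => ψ p.1 p.2 := by
  rintro ⟨t, x⟩ (ht : 0 < t)
  have hΨ : ContDiffOn ℝ ∞ (fun p : Spacetime => ψ p.1 p.2) posTime := hψ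
  have hdtd : ∀ s, 0 < s → ∀ y, dtd ψ s y = ∂ₜ (fun p => ψ p.1 p.2) (s, y) :=
    fun s hs y => dtd_eq_Dt hΨ (fun _ _ _ => rfl) hs
  have hpd : ∀ i, pd i (pd i (ψ t)) x = ∂[i] (∂[i] fun p => ψ p.1 p.2) (t, x) := fun i =>
    pd_eq_Dx (hΨ.dirDeriv isOpen_posTime _) (fun y => pd_eq_Dx hΨ (fun _ => rfl) ht i) ht i
  have := h t ht x
  rwa [dtd_eq_Dt (hΨ.dirDeriv isOpen_posTime _) hdtd ht, hdtd t ht x,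
    Finset.sum_congr rfl fun i _ => hpd i] at this

lemma Dx_waveOp (hF : ContDiffOn ℝ ∞ F posTime) (hp : p ∈ posTime) (j : Fin 3) :
    ∂[j] (waveOp b c F) p = waveOp b c (∂[j] F) p := by
  have hd : ∀ {G : Spacetime → ℝ}, ContDiffOn ℝ ∞ G posTime → DifferentiableAt ℝ G p :=
    fun hG => hG.differentiableAt_posTime hp
  have hDt := hF.dirDeriv isOpen_posTime (1, 0)
  have hΔ : DifferentiableAt ℝ (fun q => ∑ i, ∂[i] (∂[i] F) q) p :=
    DifferentiableAt.fun_sum fun i _ =>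
      hd ((hF.dirDeriv isOpen_posTime _).dirDeriv isOpen_posTime _)
  have hinv : DifferentiableAt ℝ (fun s => b * s⁻¹) p.1 :=
    (differentiableAt_inv (ne_of_gt hp)).const_mul b
  have hpow : DifferentiableAt ℝ (fun s => s ^ (-c)) p.1 :=
    Real.differentiableAt_rpow_const_of_ne _ (ne_of_gt hp)
  have hdamp : DifferentiableAt ℝ (fun q => b * q.1⁻¹ * ∂ₜ F q) p :=
    (hinv.comp p differentiableAt_fst).mul (hd hDt)
  have hlap : DifferentiableAt ℝ (fun q => q.1 ^ (-c) * ∑ i, ∂[i] (∂[i] F) q) p :=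
    (hpow.comp p differentiableAt_fst).mul hΔ
  have hfirst : DifferentiableAt ℝ (fun q => ∂ₜ (∂ₜ F) q + b * q.1⁻¹ * ∂ₜ F q) p :=
    (hd (hDt.dirDeriv isOpen_posTime _)).add hdamp
  unfold waveOp
  rw [dirDeriv_sub hfirst hlap,
    dirDeriv_add (hd (hDt.dirDeriv isOpen_posTime _)) hdamp,
    Dx_comp_fst_mul (g := fun s => b * s⁻¹) hinv (hd hDt),
    Dx_comp_fst_mul (g := fun s => s ^ (-c)) hpow hΔ,
    dirDeriv_sum _ fun i _ => hd ((hF.dirDeriv isOpen_posTime _).dirDeriv isOpen_posTime _),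
    dirDeriv_comm₃_of_contDiffOn hF hp, dirDeriv_comm_of_contDiffOn hF hp]
  simp only [dirDeriv_comm₃_of_contDiffOn hF hp (0, Pi.single j 1) (0, Pi.single _ 1)]

lemma SolvesWave.dirDeriv_space (hW : SolvesWave b c F) (hF : ContDiffOn ℝ ∞ F posTime)
    (j : Fin 3) : SolvesWave b c (∂[j] F) := fun p hp => by
  rw [← Dx_waveOp hF hp, dirDeriv_congr_of_eqOn isOpen_posTime hW hp]
  simp [dirDeriv]

lemma waveOp_rpow_fst_mul (hΨ : ContDiffOn ℝ ∞ Ψ posTime) (hp : p ∈ posTime) (a c : ℝ) :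
    waveOp (2 - a) c (fun q => q.1 ^ (a - 1) * Ψ q) p = p.1 ^ (a - 1) * waveOp a c Ψ p := by
  have hd : ∀ {G : Spacetime → ℝ}, ContDiffOn ℝ ∞ G posTime → ∀ q ∈ posTime,
      DifferentiableAt ℝ G q := fun hG _ hq => hG.differentiableAt_posTime hq
  have hDtΨ := hΨ.dirDeriv isOpen_posTime (1, 0)
  have hDt : EqOn (∂ₜ fun q => q.1 ^ (a - 1) * Ψ q)
      (fun q => q.1 ^ (a - 1 - 1) * ((a - 1) * Ψ q) + q.1 ^ (a - 1) * ∂ₜ Ψ q) posTime :=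
    fun q hq => by rw [Dt_rpow_fst_mul _ hq (hd hΨ q hq)]; ring
  have hDx : ∀ i, EqOn (∂[i] fun q => q.1 ^ (a - 1) * Ψ q)
      (fun q => q.1 ^ (a - 1) * ∂[i] Ψ q) posTime := fun i q hq =>
    Dx_comp_fst_mul (Real.differentiableAt_rpow_const_of_ne _ (ne_of_gt hq)) (hd hΨ q hq) i
  have hDtDt : ∂ₜ (∂ₜ fun q => q.1 ^ (a - 1) * Ψ q) p
      = (a - 1 - 1) * p.1 ^ (a - 1 - 1 - 1) * ((a - 1) * Ψ p)
        + p.1 ^ (a - 1 - 1) * ((a - 1) * ∂ₜ Ψ p)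
        + ((a - 1) * p.1 ^ (a - 1 - 1) * ∂ₜ Ψ p + p.1 ^ (a - 1) * ∂ₜ (∂ₜ Ψ) p) := by
    have hpow : ∀ r : ℝ, DifferentiableAt ℝ (fun q : Spacetime => q.1 ^ r) p := fun r =>
      (Real.differentiableAt_rpow_const_of_ne r (ne_of_gt hp)).comp p differentiableAt_fst
    have h1 : DifferentiableAt ℝ (fun q => q.1 ^ (a - 1 - 1) * ((a - 1) * Ψ q)) p :=
      (hpow (a - 1 - 1)).mul ((hd hΨ p hp).const_mul (a - 1))
    have h2 : DifferentiableAt ℝ (fun q => q.1 ^ (a - 1) * ∂ₜ Ψ q) p :=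
      (hpow (a - 1)).mul (hd hDtΨ p hp)
    rw [dirDeriv_congr_of_eqOn isOpen_posTime hDt hp, dirDeriv_add h1 h2,
      Dt_rpow_fst_mul _ hp ((hd hΨ p hp).const_mul _), Dt_rpow_fst_mul _ hp (hd hDtΨ p hp),
      dirDeriv_const_mul (hd hΨ p hp)]
  have hΔ : ∀ i,
      ∂[i] (∂[i] fun q => q.1 ^ (a - 1) * Ψ q) p = p.1 ^ (a - 1) * ∂[i] (∂[i] Ψ) p := fun i => by
    rw [dirDeriv_congr_of_eqOn isOpen_posTime (hDx i) hp, Dx_comp_fst_mul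
      (Real.differentiableAt_rpow_const_of_ne _ (ne_of_gt hp))
      (hd (hΨ.dirDeriv isOpen_posTime _) p hp)]
  have ht : p.1 ≠ 0 := ne_of_gt hp
  simp only [waveOp, hDtDt, hDt hp, hΔ, ← Finset.mul_sum, Real.rpow_sub_one ht]
  field_simp
  ring

lemma SolvesWave.rpow_fst_mul {a : ℝ} (hW : SolvesWave a c Ψ)
    (hΨ : ContDiffOn ℝ ∞ Ψ posTime) : SolvesWave (2 - a) c fun q => q.1 ^ (a - 1) * Ψ q :=
  fun p hp => by rw [waveOp_rpow_fst_mul hΨ hp, hW hp, Pi.zero_apply, mul_zero]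

end Wave

def energyDensity (b c : ℝ) (G : Spacetime → ℝ) (p : Spacetime) : ℝ :=
  p.1 ^ (2 * b) * ∂ₜ G p ^ 2 + p.1 ^ (2 * b - c) * ∑ i, ∂[i] G p ^ 2

def energy (b c : ℝ) (G : Spacetime → ℝ) (t : ℝ) : ℝ :=
  (1 / 2) * ∫ x in cube, energyDensity b c G (t, x)

lemma isCompact_cube : IsCompact cube := isCompact_Icc

lemma measurableSet_cube : MeasurableSet cube := measurableSet_Icc

section Energy

variable {G : Spacetime → ℝ} {b c t : ℝ}

lemma fderiv_slice_apply {x : Fin 3 → ℝ} (hG : DifferentiableAt ℝ G (t, x)) (w : Fin 3 → ℝ) :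
    fderiv ℝ (fun y => G (t, y)) x w = dirDeriv (0, w) G (t, x) := by
  rw [show (fun y => G (t, y)) = G ∘ fun y => (t, y) from rfl,
    (hG.hasFDerivAt.comp x (hasFDerivAt_prodMk_right t x)).fderiv]
  rfl

lemma integral_cube_sum_Dx_eq_zero {H : Fin 3 → Spacetime → ℝ}
    (hH : ∀ i, ContDiffOn ℝ ∞ (H i) posTime) (hper : ∀ i, SpatiallyPeriodic (H i)) (ht : 0 < t) :
    ∫ x in cube, ∑ i, ∂[i] (H i) (t, x) = 0 := by
  have hcast : ∀ i : Fin 3, (fun j => ((Pi.single i 1 : Fin 3 → ℤ) j : ℝ)) = Pi.single i 1 :=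
    fun i => by ext j; rcases eq_or_ne j i with rfl | h <;> simp [*]
  refine (setIntegral_congr_fun measurableSet_Icc fun x _ => Finset.sum_congr rfl fun i _ =>
    (fderiv_slice_apply ((hH i).differentiableAt_posTime ht) _).symm).trans ?_
  exact integral_unitCube_divergence_eq_zero_of_periodic
    (fun i => ((hH i).comp_contDiff (contDiff_const.prodMk contDiff_id) fun _ => ht).of_le
      ENat.LEInfty.out)
    (fun i y => by simpa [hcast] using hper i t ht y (Pi.single i 1))

lemma contDiffOn_energyDensity (hG : ContDiffOn ℝ ∞ G posTime) :
    ContDiffOn ℝ ∞ (energyDensity b c G) posTime :=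
  ((contDiffOn_rpow_fst _).mul ((hG.dirDeriv isOpen_posTime _).pow 2)).add
    ((contDiffOn_rpow_fst _).mul
      (ContDiffOn.sum fun _ _ => (hG.dirDeriv isOpen_posTime _).pow 2))

lemma Dt_energyDensity (hG : ContDiffOn ℝ ∞ G posTime) (hW : SolvesWave b c G)
    (ht : 0 < t) (x : Fin 3 → ℝ) :
    ∂ₜ (energyDensity b c G) (t, x)
      = (2 * b - c) * t ^ (2 * b - c - 1) * ∑ i, ∂[i] G (t, x) ^ 2
        + 2 * t ^ (2 * b - c) * ∑ i, ∂[i] (fun q => ∂ₜ G q * ∂[i] G q) (t, x) := by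
  have hp : (t, x) ∈ posTime := ht
  have hd : ∀ {H : Spacetime → ℝ}, ContDiffOn ℝ ∞ H posTime → DifferentiableAt ℝ H (t, x) :=
    fun hH => hH.differentiableAt_posTime hp
  have hDG : ∀ v, ContDiffOn ℝ ∞ (dirDeriv v G) posTime := hG.dirDeriv isOpen_posTime
  have hsq : ∀ v, DifferentiableAt ℝ (fun q => dirDeriv v G q ^ 2) (t, x) := fun v =>
    (hd (hDG v)).pow 2
  have hsum : DifferentiableAt ℝ (fun q => ∑ i, ∂[i] G q ^ 2) (t, x) :=
    DifferentiableAt.fun_sum fun i _ => hsq _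
  have hpow : ∀ r : ℝ, DifferentiableAt ℝ (fun q : Spacetime => q.1 ^ r) (t, x) := fun r =>
    (Real.differentiableAt_rpow_const_of_ne r (ne_of_gt hp)).comp (t, x) differentiableAt_fst
  have hW' := hW hp
  simp only [waveOp, Pi.zero_apply] at hW'
  have hpne : t ≠ 0 := ne_of_gt ht
  have hkin : DifferentiableAt ℝ (fun q : Spacetime => q.1 ^ (2 * b) * ∂ₜ G q ^ 2) (t, x) :=
    (hpow _).mul (hsq _)
  have hpot :
      DifferentiableAt ℝ (fun q : Spacetime => q.1 ^ (2 * b - c) * ∑ i, ∂[i] G q ^ 2) (t, x) :=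
    (hpow _).mul hsum
  unfold energyDensity
  rw [dirDeriv_add hkin hpot,
    Dt_rpow_fst_mul _ hp (hsq _), Dt_rpow_fst_mul _ hp hsum, dirDeriv_sq (hd (hDG _)),
    dirDeriv_sum _ fun i _ => hsq _]
  simp only [dirDeriv_sq (hd (hDG _)), dirDeriv_mul (hd (hDG _)) (hd (hDG _)),
    dirDeriv_comm_of_contDiffOn hG hp (1, 0), Fin.sum_univ_three, Real.rpow_sub_one hpne,
    sub_eq_add_neg (2 * b) c, Real.rpow_add ht]
  simp only [Fin.sum_univ_three] at hW'
  linear_combination (2 * t ^ (2 * b) * ∂ₜ G (t, x)) * hW'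

lemma hasDerivAt_energy (hG : ContDiffOn ℝ ∞ G posTime) (hper : SpatiallyPeriodic G)
    (hW : SolvesWave b c G) (ht : 0 < t) :
    HasDerivAt (energy b c G)
      ((2 * b - c) / 2 * t ^ (2 * b - c - 1) * ∫ x in cube, ∑ i, ∂[i] G (t, x) ^ 2) t := by
  have hflux : ∀ i, ContDiffOn ℝ ∞ (fun q => ∂ₜ G q * ∂[i] G q) posTime := fun i =>
    (hG.dirDeriv isOpen_posTime _).mul (hG.dirDeriv isOpen_posTime _)
  have hint : ∀ {H : Spacetime → ℝ}, ContDiffOn ℝ ∞ H posTime →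
      IntegrableOn (fun x => H (t, x)) cube := fun hH =>
    (continuous_slice hH.continuousOn ht).continuousOn.integrableOn_compact isCompact_cube
  have hderiv := (hasDerivAt_setIntegral_slice (μ := volume) isCompact_cube
    ((contDiffOn_energyDensity (b := b) (c := c) hG).of_le ENat.LEInfty.out) ht).const_mul (1 / 2)
  refine hderiv.congr_deriv ?_
  rw [setIntegral_congr_fun measurableSet_cube fun x _ => Dt_energyDensity hG hW ht x,
    integral_add]
  · rw [integral_const_mul, integral_const_mul, integral_cube_sum_Dx_eq_zero hflux
      (fun _ => (hper.dirDeriv _).mul (hper.dirDeriv _)) ht]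
    ring
  · exact (hint (ContDiffOn.sum fun _ _ => (hG.dirDeriv isOpen_posTime _).pow 2)).const_mul _
  · exact (hint (ContDiffOn.sum fun i _ => (hflux i).dirDeriv isOpen_posTime _)).const_mul _

lemma energy_monotoneOn (hcb : c ≤ 2 * b) (hG : ContDiffOn ℝ ∞ G posTime)
    (hper : SpatiallyPeriodic G) (hW : SolvesWave b c G) : MonotoneOn (energy b c G) (Ioi 0) := by
  have hderiv : ∀ t ∈ Ioi (0 : ℝ), HasDerivAt (energy b c G) _ t := fun t ht =>
    hasDerivAt_energy hG hper hW ht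
  refine monotoneOn_of_hasDerivWithinAt_nonneg (convex_Ioi 0)
    (fun t ht => (hderiv t ht).continuousAt.continuousWithinAt)
    (fun t ht => (hderiv t (interior_subset ht)).hasDerivWithinAt) fun t ht => ?_
  have ht : 0 < t := interior_subset ht
  have hcoef : 0 ≤ (2 * b - c) / 2 := by linarith
  have hgrad : 0 ≤ ∫ x in cube, ∑ i, ∂[i] G (t, x) ^ 2 :=
    setIntegral_nonneg measurableSet_cube fun x _ => Finset.sum_nonneg fun i _ => sq_nonneg _
  positivity

end Energy

lemma Fren_eq_energy {γ t : ℝ} {φ : ℝ → (Fin 3 → ℝ) → ℝ} (hφ : SmoothOnPos φ) (α : Fin 3 → ℕ)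
    (ht : 0 < t) :
    Fren γ φ α t = energy (2 - 2 / γ) (4 / (3 * γ)) (Dmulti α fun p => φ p.1 p.2) t := by
  have hΦ : ContDiffOn ℝ ∞ (fun p : Spacetime => φ p.1 p.2) posTime := hφ
  have hslice : ∀ s, 0 < s → ∀ y, pdMulti α (φ s) y = Dmulti α (fun p => φ p.1 p.2) (s, y) :=
    fun s hs => pdMulti_eq_Dmulti hΦ (fun _ => rfl) hs α
  have hexp : (4 : ℝ) - 4 / γ = 2 * (2 - 2 / γ) := by ring
  rw [Fren, energy, hexp]
  congr 1
  refine setIntegral_congr_fun measurableSet_cube fun x _ => ?_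
  rw [energyDensity, dtd_eq_Dt (hΦ.Dmulti α) hslice ht]
  simp only [pd_eq_Dx (hΦ.Dmulti α) (hslice t ht) ht]

theorem flrw_renormalized_energy_stiff_general
    (γ t₀ : ℝ) (hγ3 : 4 / 3 ≤ γ)
    (ψ : ℝ → (Fin 3 → ℝ) → ℝ)
    (hsmooth : SmoothOnPos ψ)
    (hper : ∀ t : ℝ, 0 < t → ZPeriodic (ψ t))
    (hwave : FLRWwave γ ψ) :
    ∀ α : Fin 3 → ℕ, ∀ t ∈ Set.Ioc (0 : ℝ) t₀,
      Fren γ (fun s x => s ^ (2 / γ - 1) * ψ s x) α t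
        ≤ Fren γ (fun s x => s ^ (2 / γ - 1) * ψ s x) α t₀ := by
  rintro α t ⟨ht, htt₀⟩
  have hΨ : ContDiffOn ℝ ∞ (fun p : Spacetime => ψ p.1 p.2) posTime := hsmooth
  have hΦ : ContDiffOn ℝ ∞ (fun p : Spacetime => p.1 ^ (2 / γ - 1) * ψ p.1 p.2) posTime :=
    (contDiffOn_rpow_fst _).mul hΨ
  have hΦper : SpatiallyPeriodic fun p => p.1 ^ (2 / γ - 1) * ψ p.1 p.2 := fun s hs x k => by
    simp only [hper s hs x k]
  have hΦwave : SolvesWave (2 - 2 / γ) (4 / (3 * γ)) fun p => p.1 ^ (2 / γ - 1) * ψ p.1 p.2 :=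
    (hwave.solvesWave hsmooth).rpow_fst_mul hΨ
  have hstiff : 4 / (3 * γ) ≤ 2 * (2 - 2 / γ) := by
    have hγ : 0 < γ := by linarith
    field_simp
    linarith
  have hΦ' : SmoothOnPos fun s x => s ^ (2 / γ - 1) * ψ s x := hΦ
  rw [Fren_eq_energy hΦ' α ht, Fren_eq_energy hΦ' α (ht.trans_le htt₀)]
  exact energy_monotoneOn hstiff (hΦ.Dmulti α)
    (Dmulti_induction (fun _ _ _ hP => hP.dirDeriv _) hΦ hΦper α)
    (Dmulti_induction (fun i _ hG hW => hW.dirDeriv_space hG i) hΦ hΦwave α)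
    ht (ht.trans_le htt₀) htt₀

/-- **Proposition 2, stiffest region (FLRW, `4/3 ≤ γ < 2`).** Renormalized energy
monotonicity `F_α(t) ≤ F_α(t₀)` for `φ = t^{2/γ−1} ψ`. -/
theorem flrw_renormalized_energy_stiff
    (γ t₀ : ℝ) (hγ1 : 2 / 3 < γ) (hγ2 : γ < 2) (hγ3 : 4 / 3 ≤ γ) (ht₀ : 0 < t₀)
    (ψ : ℝ → (Fin 3 → ℝ) → ℝ)
    (hsmooth : SmoothOnPos ψ)
    (hper : ∀ t : ℝ, 0 < t → ZPeriodic (ψ t))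
    (hwave : FLRWwave γ ψ) :
    ∀ α : Fin 3 → ℕ, ∀ t ∈ Set.Ioc (0 : ℝ) t₀,
      Fren γ (fun s x => s ^ (2 / γ - 1) * ψ s x) α t
        ≤ Fren γ (fun s x => s ^ (2 / γ - 1) * ψ s x) α t₀ :=
  flrw_renormalized_energy_stiff_general γ t₀ hγ3 ψ hsmooth hper hwave
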